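/- For every probability vector p ∈ ℝ^d with decreasing entries, the sequence of iterates B^n(p) converges in ℝ^d as n → ∞. -/

import Mathlib

open Filter Topology Kronecker Matrix
open scoped ComplexOrder

/-- Sum of the `k` largest entries of a real vector (maximum of all `k`-element subset sums). -/
noncomputable def sumKLargest {ι : Type*} [Fintype ι] (v : ι → ℝ) (k : ℕ) : ℝ :=
  sSup {x : ℝ | ∃ s : Finset ι, s.card = k ∧ ∑ i ∈ s, v i = x}

/-- `IsMajorizedBy x y` means `x ≺ y`: same total sum, and for every `k = 1,…,n` the
sum of the `k` largest entries of `x` is at most that of `y`. -/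
def IsMajorizedBy {ι : Type*} [Fintype ι] (x y : ι → ℝ) : Prop :=
  (∑ i, x i = ∑ i, y i) ∧
  ∀ k : ℕ, 1 ≤ k → k ≤ Fintype.card ι → sumKLargest x k ≤ sumKLargest y k

/-- The decreasing rearrangement of a real vector. -/
noncomputable def sortDesc {n : ℕ} (v : Fin n → ℝ) : Fin n → ℝ :=
  fun i => v (Tuple.sort v i.rev)

/-- The geometric probability vector `p*(g,d)` with entries `g^i / ∑_j g^j`. -/
noncomputable def pstar (g : ℝ) (d : ℕ) : Fin d → ℝ :=
  fun i => g ^ (i : ℕ) / ∑ j : Fin d, g ^ (j : ℕ)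

/-- The Gibbs probability vector at inverse temperature `β` for energies `E`. -/
noncomputable def gibbsVec {m : ℕ} (β : ℝ) (E : Fin m → ℝ) : Fin m → ℝ :=
  fun j => Real.exp (-(β * E j)) / ∑ k : Fin m, Real.exp (-(β * E k))

/-- The Gibbs state: diagonal density matrix with the Gibbs vector on the diagonal. -/
noncomputable def gibbsState {m : ℕ} (β : ℝ) (E : Fin m → ℝ) : Matrix (Fin m) (Fin m) ℂ :=
  Matrix.diagonal fun j => (gibbsVec β E j : ℂ)

/-- The eigenvalues of a Hermitian matrix (junk value `0` if not Hermitian). -/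
noncomputable def eigVec {ι : Type*} [Fintype ι] [DecidableEq ι] (ρ : Matrix ι ι ℂ) : ι → ℝ := by
  classical exact if h : ρ.IsHermitian then h.eigenvalues else 0

/-- The eigenvalue vector of a Hermitian matrix, listed in decreasing order. -/
noncomputable def eigVecDesc {d : ℕ} (ρ : Matrix (Fin d) (Fin d) ℂ) : Fin d → ℝ :=
  sortDesc (eigVec ρ)

/-- Partial trace over the machine: `(Tr_M X)_{s,s'} = ∑_m X_{(s,m),(s',m)}`. -/
noncomputable def ptraceM {dS dM : ℕ}
    (X : Matrix (Fin dS × Fin dM) (Fin dS × Fin dM) ℂ) : Matrix (Fin dS) (Fin dS) ℂ :=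
  Matrix.of fun s s' => ∑ m : Fin dM, X (s, m) (s', m)

/-- The coherent operation `Λ_U(ρ) = Tr_M (U (ρ ⊗ τ_M) U†)` where `τ_M` is the diagonal
machine state with diagonal `τ`. -/
noncomputable def coherentOp {dS dM : ℕ} (τ : Fin dM → ℝ)
    (U : Matrix (Fin dS × Fin dM) (Fin dS × Fin dM) ℂ)
    (ρ : Matrix (Fin dS) (Fin dS) ℂ) : Matrix (Fin dS) (Fin dS) ℂ :=
  ptraceM (U * (ρ ⊗ₖ Matrix.diagonal fun j => (τ j : ℂ)) * Uᴴ)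

/-- `Λ_{U_n} ∘ ⋯ ∘ Λ_{U_1} (ρ)`: the machine is reset to its Gibbs state before each cycle. -/
noncomputable def coherentSeq {dS dM : ℕ} (τ : Fin dM → ℝ) {n : ℕ}
    (U : Fin n → Matrix (Fin dS × Fin dM) (Fin dS × Fin dM) ℂ)
    (ρ : Matrix (Fin dS) (Fin dS) ℂ) : Matrix (Fin dS) (Fin dS) ℂ :=
  (List.ofFn U).foldl (fun σ V => coherentOp τ V σ) ρ

/-- The optimal coherent operation `A`: the diagonal matrix whose `i`-th diagonal entry is
`∑_{j<d_M} λ_{i·d_M+j}` where `λ` is the decreasing list of eigenvalues of `ρ ⊗ τ_M`. -/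
noncomputable def Aopt {dS dM : ℕ} (τ : Fin dM → ℝ)
    (ρ : Matrix (Fin dS) (Fin dS) ℂ) : Matrix (Fin dS) (Fin dS) ℂ :=
  Matrix.diagonal fun i : Fin dS =>
    ((∑ j : Fin dM,
      sortDesc
        (fun k : Fin (dS * dM) =>
          eigVec (ρ ⊗ₖ Matrix.diagonal fun l => (τ l : ℂ)) (finProdFinEquiv.symm k))
        ⟨(i : ℕ) * dM + (j : ℕ), by
          calc (i : ℕ) * dM + (j : ℕ) < (i : ℕ) * dM + dM := by
                exact Nat.add_lt_add_left j.isLt _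
            _ = ((i : ℕ) + 1) * dM := by ring
            _ ≤ dS * dM := Nat.mul_le_mul_right dM i.isLt⟩ : ℝ) : ℂ)

/-- `Δ_i(p) = a·p_i − b·p_{i−1}` for `i ≥ 1` (and `0` for `i = 0`). -/
noncomputable def delta (a b : ℝ) {d : ℕ} (p : Fin d → ℝ) (i : Fin d) : ℝ :=
  if (i : ℕ) = 0 then 0
  else a * p i - b * p ⟨(i : ℕ) - 1, Nat.lt_of_le_of_lt (Nat.sub_le _ _) i.isLt⟩

/-- The max-swap map `B`: if some `Δ_i(p) > 0`, pick an index `k̄` maximizing `Δ`,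
move `Δ_{k̄}(p)` of population from level `k̄` to level `k̄−1`, and rearrange decreasingly;
otherwise `p` is left unchanged. -/
noncomputable def maxSwap (a b : ℝ) {d : ℕ} (p : Fin d → ℝ) : Fin d → ℝ := by
  classical
  exact
    if h : ∃ k : Fin d, 0 < delta a b p k ∧ ∀ i, delta a b p i ≤ delta a b p k then
      sortDesc (fun i =>
        if i = h.choose then p h.choose - delta a b p h.choose
        else if (i : ℕ) = (h.choose : ℕ) - 1 then p i + delta a b p h.choose
        else p i)
    else p

/-!
A step of `B` moves mass from level `k̄` to the higher level `k̄ - 1` and then sorts the vector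
decreasingly; both operations can only increase every prefix sum `p_0 + ⋯ + p_{k-1}`. Since `B`
also preserves nonnegativity (as `a ≤ 1` and `b ≥ 0`) and the total mass, every prefix sum is
bounded and monotone along the iterates, hence converges, and so does every coordinate, being
a difference of two consecutive prefix sums.
-/

open Finset

section

variable {d : ℕ}

noncomputable def prefixSum (q : Fin d → ℝ) (k : ℕ) : ℝ :=
  ∑ i ∈ {i : Fin d | (i : ℕ) < k}, q i

theorem prefixSum_succ (q : Fin d → ℝ) (i : Fin d) :
    prefixSum q (i + 1) = prefixSum q i + q i := by
  have hsucc : univ.filter (fun j : Fin d => (j : ℕ) < i + 1) =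
      insert i (univ.filter fun j : Fin d => (j : ℕ) < i) := by
    ext j
    simp [le_iff_eq_or_lt, Fin.val_inj]
  rw [prefixSum, prefixSum, hsucc, sum_insert (by simp), add_comm]

theorem prefixSum_min (q : Fin d → ℝ) (k : ℕ) : prefixSum q (min d k) = prefixSum q k := by
  simp [prefixSum]

theorem prefixSum_le_sum {q : Fin d → ℝ} (hq : 0 ≤ q) (k : ℕ) : prefixSum q k ≤ ∑ i, q i :=
  sum_le_sum_of_subset_of_nonneg (filter_subset _ _) fun i _ _ => hq i

theorem sum_le_prefixSum_card_of_antitone {u : Fin d → ℝ} (hu : Antitone u)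
    (s : Finset (Fin d)) : ∑ i ∈ s, u i ≤ prefixSum u #s := by
  classical
  induction s using Finset.induction_on_max with
  | empty => simp [prefixSum]
  | insert j s hlt ih =>
    have hcard : #s ≤ j := by
      simpa using card_le_card fun x hx => mem_Iio.2 (hlt x hx)
    have hj : j ∉ s := fun hj => (hlt j hj).false
    rw [sum_insert hj, card_insert_of_notMem hj, add_comm]
    calc ∑ i ∈ s, u i + u j ≤ prefixSum u #s + u ⟨#s, by omega⟩ :=
          add_le_add ih (hu (Fin.le_def.2 hcard))
      _ = prefixSum u (#s + 1) := (prefixSum_succ u ⟨#s, by omega⟩).symm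

theorem prefixSum_le_prefixSum_transfer (q : Fin d → ℝ) {i j : Fin d} (hij : i < j) {D : ℝ}
    (hD : 0 ≤ D) (k : ℕ) : prefixSum q k ≤ prefixSum (q + Pi.single i D - Pi.single j D) k := by
  simp only [prefixSum, Pi.add_apply, Pi.sub_apply, sum_add_distrib, sum_sub_distrib,
    sum_pi_single', mem_filter_univ]
  have : (i : ℕ) < j := hij
  split_ifs <;> linarith

theorem antitone_sortDesc (q : Fin d → ℝ) : Antitone (sortDesc q) :=
  fun _ _ hij => Tuple.monotone_sort q (Fin.rev_le_rev.2 hij)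

theorem sum_sortDesc (q : Fin d → ℝ) : ∑ i, sortDesc q i = ∑ i, q i :=
  Equiv.sum_comp (Fin.revPerm.trans (Tuple.sort q)) q

theorem sortDesc_nonneg {q : Fin d → ℝ} (hq : 0 ≤ q) : 0 ≤ sortDesc q :=
  fun i => hq (Tuple.sort q i.rev)

theorem prefixSum_le_prefixSum_sortDesc (q : Fin d → ℝ) (k : ℕ) :
    prefixSum q k ≤ prefixSum (sortDesc q) k := by
  set σ := Fin.revPerm.trans (Tuple.sort q)
  have hsort : sortDesc q = q ∘ σ := rfl
  set P : Finset (Fin d) := {i | (i : ℕ) < k}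
  calc prefixSum q k = ∑ i ∈ P.map σ.symm.toEmbedding, sortDesc q i := by
        rw [sum_map, hsort]
        simp only [Function.comp_apply, Equiv.coe_toEmbedding, Equiv.apply_symm_apply,
          prefixSum, P]
    _ ≤ prefixSum (sortDesc q) #(P.map σ.symm.toEmbedding) :=
        sum_le_prefixSum_card_of_antitone (antitone_sortDesc q) _
    _ = prefixSum (sortDesc q) k := by rw [card_map, Fin.card_filter_val_lt, prefixSum_min]

theorem maxSwap_eq_self_or_transfer (a b : ℝ) (q : Fin d → ℝ) :
    maxSwap a b q = q ∨ ∃ i j : Fin d, (i : ℕ) + 1 = j ∧ 0 < a * q j - b * q i ∧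
      maxSwap a b q =
        sortDesc (q + Pi.single i (a * q j - b * q i) - Pi.single j (a * q j - b * q i)) := by
  classical
  unfold maxSwap
  split_ifs with h
  · right
    obtain ⟨hpos, -⟩ := h.choose_spec
    set k := h.choose
    have hk : (k : ℕ) ≠ 0 := by
      intro hk
      simp [delta, hk] at hpos
    refine ⟨⟨k - 1, by omega⟩, k, by simp; omega, by simpa [delta, hk] using hpos, ?_⟩
    congr 1
    ext l
    rcases eq_or_ne l k with rfl | hlk
    · simp [Pi.single_apply, delta, hk, Fin.ext_iff]
      omega
    · simp only [Pi.add_apply, Pi.sub_apply, Pi.single_apply, delta, hk, hlk, if_false,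
        Fin.ext_iff]
      split_ifs <;> simp
  · exact Or.inl rfl

theorem sum_maxSwap (a b : ℝ) (q : Fin d → ℝ) : ∑ i, maxSwap a b q i = ∑ i, q i := by
  rcases maxSwap_eq_self_or_transfer a b q with h | ⟨i, j, -, -, h⟩ <;> rw [h]
  simp [sum_sortDesc, sum_add_distrib, sum_sub_distrib]

theorem maxSwap_nonneg {a b : ℝ} (ha : a ≤ 1) (hb : 0 ≤ b) {q : Fin d → ℝ} (hq : 0 ≤ q) :
    0 ≤ maxSwap a b q := by
  rcases maxSwap_eq_self_or_transfer a b q with h | ⟨i, j, hij, hD, h⟩ <;> rw [h]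
  · exact hq
  refine sortDesc_nonneg fun l => ?_
  have hqi : 0 ≤ q i := hq i
  have hqj : 0 ≤ q j := hq j
  rcases eq_or_ne l j with rfl | hlj
  · have hil : i ≠ l := fun h => by simp [h] at hij
    -- the donor keeps `(1 - a) q_j + b q_i ≥ 0`
    simp [hil]
    nlinarith
  · simp only [Pi.add_apply, Pi.sub_apply, Pi.zero_apply, Pi.single_apply, hlj, if_false,
      sub_zero]
    split_ifs with hli
    · rw [hli]
      linarith
    · simpa using hq l

theorem prefixSum_le_prefixSum_maxSwap (a b : ℝ) (q : Fin d → ℝ) (k : ℕ) :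
    prefixSum q k ≤ prefixSum (maxSwap a b q) k := by
  rcases maxSwap_eq_self_or_transfer a b q with h | ⟨i, j, hij, hD, h⟩ <;> rw [h]
  exact (prefixSum_le_prefixSum_transfer q (Fin.lt_def.2 (by omega)) hD.le k).trans
    (prefixSum_le_prefixSum_sortDesc _ k)

theorem exists_tendsto_of_monotone_prefixSum {q : ℕ → Fin d → ℝ}
    (hmono : ∀ k, Monotone fun n => prefixSum (q n) k)
    (hbdd : ∀ k, BddAbove (Set.range fun n => prefixSum (q n) k)) :
    ∃ L, Tendsto q atTop (𝓝 L) := by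
  have hlim k := tendsto_atTop_ciSup (hmono k) (hbdd k)
  refine ⟨fun i => (⨆ n, prefixSum (q n) (i + 1)) - ⨆ n, prefixSum (q n) i,
    tendsto_pi_nhds.2 fun i => ?_⟩
  simpa only [prefixSum_succ, add_sub_cancel_left] using (hlim (i + 1)).sub (hlim i)

end

theorem maxSwap_iterates_converge_general {d : ℕ}
    (a b : ℝ) (hb : 0 < b) (hab : a + b ≤ 1)
    (p : Fin d → ℝ) (hnn : ∀ i, 0 ≤ p i) :
    ∃ L : Fin d → ℝ,
      Filter.Tendsto (fun n : ℕ => (maxSwap a b)^[n] p) Filter.atTop (nhds L) := by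
  have hinv (n : ℕ) : 0 ≤ (maxSwap a b)^[n] p ∧ ∑ i, (maxSwap a b)^[n] p i = ∑ i, p i :=
    Function.Iterate.rec (fun q : Fin d → ℝ => 0 ≤ q ∧ ∑ i, q i = ∑ i, p i) ⟨hnn, rfl⟩
      (fun q hq => ⟨maxSwap_nonneg (by linarith) hb.le hq.1, (sum_maxSwap a b q).trans hq.2⟩) n
  refine exists_tendsto_of_monotone_prefixSum (fun k => monotone_nat_of_le_succ fun n => ?_)
    fun k => ⟨∑ i, p i, ?_⟩
  · rw [Function.iterate_succ_apply']
    exact prefixSum_le_prefixSum_maxSwap a b _ k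
  · rintro _ ⟨n, rfl⟩
    exact (prefixSum_le_sum (hinv n).1 k).trans (hinv n).2.le

/-- For a decreasing probability vector `p`, the iterates `B^n(p)` converge. -/
theorem maxSwap_iterates_converge {d : ℕ} (hd : 2 ≤ d)
    (a b : ℝ) (hb : 0 < b) (hba : b ≤ a) (hab : a + b ≤ 1)
    (p : Fin d → ℝ) (hnn : ∀ i, 0 ≤ p i) (hsum : ∑ i, p i = 1) (hdec : Antitone p) :
    ∃ L : Fin d → ℝ,
      Filter.Tendsto (fun n : ℕ => (maxSwap a b)^[n] p) Filter.atTop (nhds L) :=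
  maxSwap_iterates_converge_general a b hb hab p hnn
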